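/- Let δ ∈ ℝ^15 be the dissimilarity map on {1,…,6} with coordinates (δ_12, δ_13, δ_14, δ_15, δ_16, δ_23, δ_24, δ_25, δ_26, δ_34, δ_35, δ_36, δ_45, δ_46, δ_56) = (35, 22, 32, 49, 42, 26, 34, 23, 32, 39, 41, 34, 46, 49, 32). Then d(δ, T_6) = d(δ, G_{2,6}) = 5, the sets C(δ, T_6) and C(δ, G_{2,6}) coincide, and this set of l∞-closest points is not topologically connected. -/

import Mathlib

/-!
Near `δ`, every point of `G_{2,6}` obeys five four-point conditions, on the quadruples `{1,2,3,4}`,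
`{1,2,4,5}`, `{1,2,3,5}` and `{2,3,5,6}`; splitting each into its two cases leaves `2⁵` linear
systems in the coordinate bounds `|x_ij - δ_ij| ≤ r`. None is feasible for `r < 5`, and for
`r = 5` each one keeps `x₁₂` out of the interval `(32, 34)`.

Such a point is automatically a tree metric: its entries are positive since those of `δ` exceed
`5`, and a triangle inequality of `δ` with slack at least `3 · 5` survives the perturbation; the
few triangles of `δ` with less slack are recovered from a four-point condition through a fourth
leaf. Hence `C(δ, T₆) = C(δ, G_{2,6})`. Two explicit integral tree metrics at distance `5` with
`x₁₂ = 32` and `x₁₂ = 34` show that this set meets both sides of the hyperplane `x₁₂ = 33`, which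
it avoids, so it is disconnected.
-/

/-- Index set for unordered pairs of distinct elements of `{1,…,n}`: ordered pairs
`(i, j)` with `i < j`. -/
abbrev PairIdx (n : ℕ) := {p : Fin n × Fin n // p.1 < p.2}

/-- A dissimilarity map on `n` elements: a point of `ℝ^(n choose 2)`, viewed as a
real-valued function on unordered pairs of distinct elements.  The product metric on this
type is exactly the `l∞`-metric. -/
abbrev DissimMap (n : ℕ) := PairIdx n → ℝ

/-- The value of a dissimilarity map on the unordered pair `{i, j}` (zero if `i = j`). -/
def dm {n : ℕ} (u : DissimMap n) (i j : Fin n) : ℝ :=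
  if h : i < j then u ⟨(i, j), h⟩ else if h' : j < i then u ⟨(j, i), h'⟩ else 0

/-- The set of ultrametrics on `n` elements. -/
def Ultrametrics (n : ℕ) : Set (DissimMap n) :=
  {u | ∀ i j k : Fin n, i ≠ j → i ≠ k → j ≠ k → dm u i j ≤ max (dm u i k) (dm u j k)}

/-- The set of points of `S` that are `l∞`-closest to `x`. -/
noncomputable def closestPts {n : ℕ} (x : DissimMap n) (S : Set (DissimMap n)) :
    Set (DissimMap n) :=
  {y ∈ S | dist x y = Metric.infDist x S}

/-- Build a dissimilarity map from a matrix of values. -/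
def ofMat {n : ℕ} (A : Matrix (Fin n) (Fin n) ℝ) : DissimMap n := fun p => A p.1.1 p.1.2

/-- The set of tree metrics on `n` elements: positive off the diagonal and satisfying the
four-point condition for all (not necessarily distinct) quadruples, with the convention
`x_ii = 0` built into `dm`. -/
def TreeMetrics (n : ℕ) : Set (DissimMap n) :=
  {x | (∀ i j : Fin n, i ≠ j → 0 < dm x i j) ∧
    ∀ i j k l : Fin n,
      dm x i j + dm x k l ≤ max (dm x i k + dm x j l) (dm x i l + dm x j k)}

/-- The tropical Grassmannian `G_{2,n}`: points satisfying the four-point condition for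
all quadruples of pairwise distinct elements. -/
def TropGrass (n : ℕ) : Set (DissimMap n) :=
  {x | ∀ i j k l : Fin n, i ≠ j → i ≠ k → i ≠ l → j ≠ k → j ≠ l → k ≠ l →
    dm x i j + dm x k l ≤ max (dm x i k + dm x j l) (dm x i l + dm x j k)}

section General

variable {n : ℕ}

@[simp]
theorem dm_self (x : DissimMap n) (i : Fin n) : dm x i i = 0 := by
  simp [dm]

theorem dm_comm (x : DissimMap n) (i j : Fin n) : dm x i j = dm x j i := by
  unfold dm
  rcases lt_trichotomy i j with h | rfl | h
  · rw [dif_pos h, dif_neg h.asymm, dif_pos h]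
  · rfl
  · rw [dif_neg h.asymm, dif_pos h, dif_pos h]

theorem continuous_dm (i j : Fin n) : Continuous fun x : DissimMap n => dm x i j := by
  unfold dm
  split_ifs <;> fun_prop

theorem dm_ofMat {A : Matrix (Fin n) (Fin n) ℝ} (hA : A.IsSymm) (hA₀ : ∀ i, A i i = 0)
    (i j : Fin n) : dm (ofMat A) i j = A i j := by
  unfold dm
  rcases lt_trichotomy i j with h | rfl | h
  · rw [dif_pos h]; rfl
  · simp [hA₀]
  · rw [dif_neg h.asymm, dif_pos h]; exact hA.apply i j

theorem abs_dm_sub_le_dist (x y : DissimMap n) (i j : Fin n) :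
    |dm x i j - dm y i j| ≤ dist x y := by
  unfold dm
  split_ifs
  · exact (Real.dist_eq _ _).symm.le.trans (dist_le_pi_dist x y _)
  · exact (Real.dist_eq _ _).symm.le.trans (dist_le_pi_dist x y _)
  · simp

theorem treeMetrics_subset_tropGrass : TreeMetrics n ⊆ TropGrass n :=
  fun _ hx i j k l _ _ _ _ _ _ => hx.2 i j k l

theorem four_point_of_mem_tropGrass {x : DissimMap n} (hx : x ∈ TropGrass n)
    (i j k l : Fin n) (hij : i < j) (hjk : j < k) (hkl : k < l) :
    dm x i j + dm x k l ≤ max (dm x i k + dm x j l) (dm x i l + dm x j k) ∧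
    dm x i k + dm x j l ≤ max (dm x i j + dm x k l) (dm x i l + dm x j k) ∧
    dm x i l + dm x j k ≤ max (dm x i j + dm x k l) (dm x i k + dm x j l) := by
  have hik := hij.trans hjk
  have hjl := hjk.trans hkl
  have hil := hik.trans hkl
  refine ⟨hx i j k l hij.ne hik.ne hil.ne hjk.ne hjl.ne hkl.ne, ?_, ?_⟩
  · simpa [dm_comm x k j] using hx i k j l hik.ne hij.ne hil.ne hjk.ne' hkl.ne hjl.ne
  · simpa [dm_comm x l j, dm_comm x l k, max_comm] using
      hx i l j k hil.ne hij.ne hik.ne hjl.ne' hkl.ne' hjk.ne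

theorem mem_treeMetrics_of_mem_tropGrass {x : DissimMap n} (hx : x ∈ TropGrass n)
    (hpos : ∀ i j, i ≠ j → 0 < dm x i j)
    (htri : ∀ i j k, dm x i j ≤ dm x i k + dm x k j) : x ∈ TreeMetrics n := by
  refine ⟨hpos, fun i j k l => ?_⟩
  have hcomm := dm_comm x
  rcases eq_or_ne i j with rfl | hij
  · exact le_max_of_le_left (by simpa [hcomm k i] using htri k l i)
  rcases eq_or_ne k l with rfl | hkl
  · exact le_max_of_le_left (by simpa [hcomm k j] using htri i j k)
  rcases eq_or_ne i k with rfl | hik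
  · exact le_max_of_le_right (by rw [hcomm j i]; linarith)
  rcases eq_or_ne i l with rfl | hil
  · exact le_max_of_le_left (by rw [hcomm k i, hcomm j i]; linarith)
  rcases eq_or_ne j k with rfl | hjk
  · exact le_max_left _ _
  rcases eq_or_ne j l with rfl | hjl
  · exact le_max_of_le_right (by rw [hcomm k j])
  exact hx i j k l hij hik hil hjk hjl hkl

theorem dm_triangle_of_four_point {x : DissimMap n} (hx : x ∈ TropGrass n) {i j k l : Fin n}
    (hij : i ≠ j) (hik : i ≠ k) (hil : i ≠ l) (hjk : j ≠ k) (hjl : j ≠ l) (hkl : k ≠ l)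
    (hj : dm x j l ≤ dm x j k + dm x k l) (hi : dm x i l ≤ dm x i k + dm x k l) :
    dm x i j ≤ dm x i k + dm x k j := by
  rw [dm_comm x k j]
  rcases le_max_iff.mp (hx i j k l hij hik hil hjk hjl hkl) with h | h <;> linarith

theorem dm_pos_of_dist_le {x y : DissimMap n} {r : ℝ} (hd : dist y x ≤ r) {i j : Fin n}
    (h : r < dm y i j) : 0 < dm x i j := by
  have := (abs_le.mp ((abs_dm_sub_le_dist y x i j).trans hd)).2
  linarith

theorem dm_triangle_of_dist_le {x y : DissimMap n} {r : ℝ} (hd : dist y x ≤ r) {i j k : Fin n}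
    (h : dm y i j + 3 * r ≤ dm y i k + dm y k j) : dm x i j ≤ dm x i k + dm x k j := by
  have hb a b : |dm y a b - dm x a b| ≤ r := (abs_dm_sub_le_dist y x a b).trans hd
  linarith [(abs_le.mp (hb i j)).1, (abs_le.mp (hb i k)).2, (abs_le.mp (hb k j)).2]

theorem mem_treeMetrics_of_dist_le {x y : DissimMap n} {r : ℝ} (hx : x ∈ TropGrass n)
    (hd : dist y x ≤ r) (hpos : ∀ i j, i ≠ j → r < dm y i j)
    (htri : ∀ i j k, i ≠ j → i ≠ k → j ≠ k → dm y i j + 3 * r ≤ dm y i k + dm y k j ∨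
      ∃ l, i ≠ l ∧ j ≠ l ∧ k ≠ l ∧ dm y j l + 3 * r ≤ dm y j k + dm y k l ∧
        dm y i l + 3 * r ≤ dm y i k + dm y k l) :
    x ∈ TreeMetrics n := by
  have hxpos i j (h : i ≠ j) : 0 < dm x i j := dm_pos_of_dist_le hd (hpos i j h)
  refine mem_treeMetrics_of_mem_tropGrass hx hxpos fun i j k => ?_
  rcases eq_or_ne i k with rfl | hik
  · simp
  rcases eq_or_ne j k with rfl | hjk
  · simp
  rcases eq_or_ne i j with rfl | hij
  · simpa using add_nonneg (hxpos i k hik).le (hxpos k i hik.symm).le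
  rcases htri i j k hij hik hjk with h | ⟨l, hil, hjl, hkl, hj, hi⟩
  · exact dm_triangle_of_dist_le hd h
  · exact dm_triangle_of_four_point hx hij hik hil hjk hjl hkl
      (dm_triangle_of_dist_le hd hj) (dm_triangle_of_dist_le hd hi)

-- Integer entries let `decide` check the finitely many conditions on a concrete matrix.
noncomputable def ofIntMat (B : Fin n → Fin n → ℤ) : DissimMap n :=
  ofMat (.of fun i j => (B i j : ℝ))

theorem dm_ofIntMat {B : Fin n → Fin n → ℤ} (hB : ∀ i j, B i j = B j i) (hB₀ : ∀ i, B i i = 0)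
    (i j : Fin n) : dm (ofIntMat B) i j = B i j :=
  dm_ofMat (Matrix.IsSymm.ext fun i j => by simp [hB i j]) (by simp [hB₀]) i j

theorem ofIntMat_mem_treeMetrics {B : Fin n → Fin n → ℤ} (hB : ∀ i j, B i j = B j i)
    (hB₀ : ∀ i, B i i = 0) (hpos : ∀ i j, i ≠ j → 0 < B i j)
    (h4 : ∀ i j k l, B i j + B k l ≤ max (B i k + B j l) (B i l + B j k)) :
    ofIntMat B ∈ TreeMetrics n := by
  simp only [TreeMetrics, Set.mem_ofPred_eq, dm_ofIntMat hB hB₀]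
  exact ⟨fun i j h => mod_cast hpos i j h, fun i j k l => mod_cast h4 i j k l⟩

theorem dist_ofIntMat_le {A B : Fin n → Fin n → ℤ} {r : ℕ} (h : ∀ i j, |A i j - B i j| ≤ r) :
    dist (ofIntMat A) (ofIntMat B) ≤ r :=
  (dist_pi_le_iff r.cast_nonneg).2 fun p => by
    simpa [ofIntMat, ofMat, Real.dist_eq] using (Int.cast_le (R := ℝ)).2 (h p.1.1 p.1.2)

end General

theorem Metric.infDist_eq_of_mem_of_forall_le {α : Type*} [PseudoMetricSpace α] {x y : α}
    {s : Set α} {r : ℝ} (hy : y ∈ s) (hxy : dist x y ≤ r) (h : ∀ z ∈ s, r ≤ dist x z) :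
    Metric.infDist x s = r :=
  le_antisymm ((Metric.infDist_le_dist_of_mem hy).trans hxy) ((Metric.le_infDist ⟨y, hy⟩).2 h)

-- Elements are indexed by `Fin 6`, so the paper's pair `{1, 2}` is `(0, 1)` here.
noncomputable def δ₆ : DissimMap 6 :=
  ofMat !![0,35,22,32,49,42; 35,0,26,34,23,32; 22,26,0,39,41,34;
           32,34,39,0,46,49; 49,23,41,46,0,32; 42,32,34,49,32,0]

def δ₆Int : Fin 6 → Fin 6 → ℤ :=
  ![![0, 35, 22, 32, 49, 42], ![35, 0, 26, 34, 23, 32], ![22, 26, 0, 39, 41, 34],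
    ![32, 34, 39, 0, 46, 49], ![49, 23, 41, 46, 0, 32], ![42, 32, 34, 49, 32, 0]]

theorem δ₆_eq_ofIntMat : δ₆ = ofIntMat δ₆Int := by
  rw [δ₆, ofIntMat]
  congr 1
  ext i j
  fin_cases i <;> fin_cases j <;> norm_num [δ₆Int]

theorem dm_δ₆ (i j : Fin 6) : dm δ₆ i j = δ₆Int i j := by
  rw [δ₆_eq_ofIntMat, dm_ofIntMat (by decide) (by decide)]

theorem abs_dm_sub_δ₆_le {x : DissimMap 6} {r : ℝ} (hd : dist δ₆ x ≤ r) :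
    |dm x 0 1 - 35| ≤ r ∧ |dm x 0 2 - 22| ≤ r ∧ |dm x 0 3 - 32| ≤ r ∧ |dm x 0 4 - 49| ≤ r ∧
    |dm x 0 5 - 42| ≤ r ∧ |dm x 1 2 - 26| ≤ r ∧ |dm x 1 3 - 34| ≤ r ∧ |dm x 1 4 - 23| ≤ r ∧
    |dm x 1 5 - 32| ≤ r ∧ |dm x 2 3 - 39| ≤ r ∧ |dm x 2 4 - 41| ≤ r ∧ |dm x 2 5 - 34| ≤ r ∧
    |dm x 3 4 - 46| ≤ r ∧ |dm x 3 5 - 49| ≤ r ∧ |dm x 4 5 - 32| ≤ r := by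
  have h (i j : Fin 6) : |dm x i j - dm δ₆ i j| ≤ r :=
    (abs_dm_sub_le_dist x δ₆ i j).trans ((dist_comm x δ₆).trans_le hd)
  exact ⟨h 0 1, h 0 2, h 0 3, h 0 4, h 0 5, h 1 2, h 1 3, h 1 4, h 1 5, h 2 3, h 2 4, h 2 5,
    h 3 4, h 3 5, h 4 5⟩

theorem eq_five_and_dm_zero_one_gap {x : DissimMap 6} (hx : x ∈ TropGrass 6) {r : ℝ}
    (hd : dist δ₆ x ≤ r) (hr : r ≤ 5) : r = 5 ∧ (dm x 0 1 ≤ 32 ∨ 34 ≤ dm x 0 1) := by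
  have hb := abs_dm_sub_δ₆_le hd
  simp only [abs_le] at hb
  casesm* _ ∧ _
  obtain ⟨f₀, f₁, -⟩ := four_point_of_mem_tropGrass hx 0 1 2 3 (by decide) (by decide) (by decide)
  obtain ⟨-, -, f₂⟩ := four_point_of_mem_tropGrass hx 0 1 3 4 (by decide) (by decide) (by decide)
  obtain ⟨-, -, f₃⟩ := four_point_of_mem_tropGrass hx 0 1 2 4 (by decide) (by decide) (by decide)
  obtain ⟨-, -, f₄⟩ := four_point_of_mem_tropGrass hx 1 2 4 5 (by decide) (by decide) (by decide)
  simp only [le_max_iff] at f₀ f₁ f₂ f₃ f₄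
  have h5 : 5 ≤ r := by
    rcases f₀ with f₀ | f₀ <;> rcases f₁ with f₁ | f₁ <;> rcases f₂ with f₂ | f₂ <;>
      rcases f₃ with f₃ | f₃ <;> rcases f₄ with f₄ | f₄ <;> linarith
  obtain rfl : r = 5 := le_antisymm hr h5
  refine ⟨rfl, ?_⟩
  by_contra! hgap
  rcases f₀ with f₀ | f₀ <;> rcases f₁ with f₁ | f₁ <;> rcases f₂ with f₂ | f₂ <;>
    rcases f₃ with f₃ | f₃ <;> rcases f₄ with f₄ | f₄ <;> linarith

theorem five_le_dist_δ₆ {x : DissimMap 6} (hx : x ∈ TropGrass 6) : 5 ≤ dist δ₆ x := by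
  by_contra! h
  linarith [(eq_five_and_dm_zero_one_gap hx le_rfl h.le).1]

theorem mem_treeMetrics_of_dist_δ₆_le {x : DissimMap 6} (hx : x ∈ TropGrass 6)
    (hd : dist δ₆ x ≤ 5) : x ∈ TreeMetrics 6 := by
  refine mem_treeMetrics_of_dist_le hx hd ?_ ?_ <;> simp only [dm_δ₆] <;>
    exact_mod_cast (by decide)

-- Two closest tree metrics, named after their `(0, 1)` entry.
def τ₃₂ : Fin 6 → Fin 6 → ℤ :=
  ![![0, 32, 27, 37, 44, 43], ![32, 0, 28, 39, 28, 27], ![27, 28, 0, 34, 40, 39],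
    ![37, 39, 34, 0, 51, 50], ![44, 28, 40, 51, 0, 37], ![43, 27, 39, 50, 37, 0]]

def τ₃₄ : Fin 6 → Fin 6 → ℤ :=
  ![![0, 34, 27, 37, 44, 42], ![34, 0, 31, 36, 28, 27], ![27, 31, 0, 34, 41, 39],
    ![37, 36, 34, 0, 46, 44], ![44, 28, 41, 46, 0, 37], ![42, 27, 39, 44, 37, 0]]

theorem dist_δ₆_ofIntMat_le {B : Fin 6 → Fin 6 → ℤ} (h : ∀ i j, |δ₆Int i j - B i j| ≤ 5) :
    dist δ₆ (ofIntMat B) ≤ 5 := by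
  rw [δ₆_eq_ofIntMat]
  exact_mod_cast dist_ofIntMat_le h

theorem τ₃₂_mem_treeMetrics : ofIntMat τ₃₂ ∈ TreeMetrics 6 :=
  ofIntMat_mem_treeMetrics (by decide) (by decide) (by decide) (by decide)

theorem τ₃₄_mem_treeMetrics : ofIntMat τ₃₄ ∈ TreeMetrics 6 :=
  ofIntMat_mem_treeMetrics (by decide) (by decide) (by decide) (by decide)

theorem dist_δ₆_τ₃₂_le : dist δ₆ (ofIntMat τ₃₂) ≤ 5 :=
  dist_δ₆_ofIntMat_le (by decide)

theorem dist_δ₆_τ₃₄_le : dist δ₆ (ofIntMat τ₃₄) ≤ 5 :=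
  dist_δ₆_ofIntMat_le (by decide)

theorem infDist_δ₆_tropGrass : Metric.infDist δ₆ (TropGrass 6) = 5 :=
  Metric.infDist_eq_of_mem_of_forall_le (treeMetrics_subset_tropGrass τ₃₂_mem_treeMetrics)
    dist_δ₆_τ₃₂_le fun _ hz => five_le_dist_δ₆ hz

theorem infDist_δ₆_treeMetrics : Metric.infDist δ₆ (TreeMetrics 6) = 5 :=
  Metric.infDist_eq_of_mem_of_forall_le τ₃₂_mem_treeMetrics dist_δ₆_τ₃₂_le
    fun _ hz => five_le_dist_δ₆ (treeMetrics_subset_tropGrass hz)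

theorem closestPts_δ₆_treeMetrics_eq_tropGrass :
    closestPts δ₆ (TreeMetrics 6) = closestPts δ₆ (TropGrass 6) := by
  ext y
  simp only [closestPts, Set.mem_ofPred_eq, infDist_δ₆_treeMetrics, infDist_δ₆_tropGrass]
  exact ⟨fun ⟨hy, hd⟩ => ⟨treeMetrics_subset_tropGrass hy, hd⟩,
    fun ⟨hy, hd⟩ => ⟨mem_treeMetrics_of_dist_δ₆_le hy hd.le, hd⟩⟩

theorem mem_closestPts_δ₆_treeMetrics {y : DissimMap 6} (hy : y ∈ TreeMetrics 6)
    (hd : dist δ₆ y ≤ 5) : y ∈ closestPts δ₆ (TreeMetrics 6) :=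
  ⟨hy, by
    rw [infDist_δ₆_treeMetrics]
    exact hd.antisymm (five_le_dist_δ₆ (treeMetrics_subset_tropGrass hy))⟩

theorem not_isPreconnected_closestPts_δ₆ : ¬ IsPreconnected (closestPts δ₆ (TreeMetrics 6)) := by
  intro h
  have hgap : ∀ y ∈ closestPts δ₆ (TreeMetrics 6), dm y 0 1 ≠ 33 := by
    rintro y ⟨hy, hd⟩ h33
    rw [infDist_δ₆_treeMetrics] at hd
    rcases (eq_five_and_dm_zero_one_gap (treeMetrics_subset_tropGrass hy) hd.le le_rfl).2
      with hle | hge <;> linarith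
  have hτ₃₄ : 33 < dm (ofIntMat τ₃₄) 0 1 := by norm_num [dm, ofIntMat, ofMat, τ₃₄]
  have hτ₃₂ : dm (ofIntMat τ₃₂) 0 1 < 33 := by norm_num [dm, ofIntMat, ofMat, τ₃₂]
  refine hτ₃₂.not_gt (h.lt_of_ne (continuous_dm 0 1).continuousOn hgap ⟨_, ?_, hτ₃₄⟩ ?_)
  · exact mem_closestPts_δ₆_treeMetrics τ₃₄_mem_treeMetrics dist_δ₆_τ₃₄_le
  · exact mem_closestPts_δ₆_treeMetrics τ₃₂_mem_treeMetrics dist_δ₆_τ₃₂_le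

/-- for the explicit dissimilarity map
`δ = (35,22,32,49,42,26,34,23,32,39,41,34,46,49,32)` on six elements,
`d(δ, T₆) = d(δ, G₂,₆) = 5`, the sets of `l∞`-closest points in `T₆` and in `G₂,₆`
coincide, and this set is not topologically connected. -/
theorem closest_tree_metrics_disconnected :
    Metric.infDist
      (ofMat !![0,35,22,32,49,42; 35,0,26,34,23,32; 22,26,0,39,41,34;
                32,34,39,0,46,49; 49,23,41,46,0,32; 42,32,34,49,32,0])
      (TreeMetrics 6) = 5 ∧
    Metric.infDist
      (ofMat !![0,35,22,32,49,42; 35,0,26,34,23,32; 22,26,0,39,41,34;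
                32,34,39,0,46,49; 49,23,41,46,0,32; 42,32,34,49,32,0])
      (TropGrass 6) = 5 ∧
    closestPts
      (ofMat !![0,35,22,32,49,42; 35,0,26,34,23,32; 22,26,0,39,41,34;
                32,34,39,0,46,49; 49,23,41,46,0,32; 42,32,34,49,32,0])
      (TreeMetrics 6) =
    closestPts
      (ofMat !![0,35,22,32,49,42; 35,0,26,34,23,32; 22,26,0,39,41,34;
                32,34,39,0,46,49; 49,23,41,46,0,32; 42,32,34,49,32,0])
      (TropGrass 6) ∧
    ¬ IsPreconnected (closestPts
      (ofMat !![0,35,22,32,49,42; 35,0,26,34,23,32; 22,26,0,39,41,34;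
                32,34,39,0,46,49; 49,23,41,46,0,32; 42,32,34,49,32,0])
      (TreeMetrics 6)) :=
  ⟨infDist_δ₆_treeMetrics, infDist_δ₆_tropGrass, closestPts_δ₆_treeMetrics_eq_tropGrass,
    not_isPreconnected_closestPts_δ₆⟩
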